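/- Let n ≥ 2 and let A = Mₙ(ℂ) be the algebra of n×n complex matrices, regarded as a bimodule over itself. Let m, k be positive integers with m ≠ k. If δ : A → A is an additive map with δ(1) = 0 satisfying (m+k)·δ(XY+YX) = 2m·δ(X)·Y + 2m·δ(Y)·X + 2k·X·δ(Y) + 2k·Y·δ(X) whenever XY = YX = 0, then δ = 0. -/

import Mathlib

/-!
Putting `Y = 1 - Q` into the defining identity shows that `δ` kills every idempotent `Q`: comparing
the `Q _ Q`, `Q _` and `_ Q` parts of the resulting equation forces `δ Q = 0` as soon as `m ≠ k`.
Off-diagonal matrix units `c Eᵢⱼ` are differences of idempotents, so `δ` kills them too. The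
diagonal ones `c Eᵢᵢ` are not integer combinations of idempotents (those have integral trace), so
instead `X = c Eᵢᵢ` is paired with `Y = 1 - Q` for the idempotents `Eᵢᵢ`, `Eᵢᵢ + Eᵢⱼ`, `Eᵢᵢ + Eⱼᵢ`.
Comparing entries gives `m Tᵢᵢ + k Tⱼⱼ = 0 = m Tⱼⱼ + k Tᵢᵢ` for `T = δ (c Eᵢᵢ)`, hence `Tᵢᵢ = 0`
because `m² ≠ k²`, and then every other entry of `T` is killed by `m`.
-/

def IsJordanDerivableAtZero {A : Type*} [Ring A] (m k : ℕ) (δ : A →+ A) : Prop :=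
  ∀ X Y : A, X * Y = 0 → Y * X = 0 →
    (m + k) • δ (X * Y + Y * X) =
      (2 * m) • (δ X * Y) + (2 * m) • (δ Y * X) + (2 * k) • (X * δ Y) + (2 * k) • (Y * δ X)

theorem eq_zero_of_nsmul_eq_nsmul {G : Type*} [AddCommGroup G] [IsAddTorsionFree G] {a b : ℕ}
    {x : G} (hab : a ≠ b) (h : a • x = b • x) : x = 0 := by
  have hab' : (a : ℤ) - b ≠ 0 := sub_ne_zero.mpr (Nat.cast_injective.ne hab)
  refine (IsAddTorsionFree.zsmul_eq_zero_iff_right hab').mp ?_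
  linear_combination (norm := module) h

theorem IsIdempotentElem.eq_zero_of_add_nsmul_eq {A : Type*} [Ring A] [IsAddTorsionFree A]
    {Q D : A} (hQ : IsIdempotentElem Q) {m k : ℕ} (hmk : m ≠ k)
    (h : (m + k) • D = (2 * m) • (D * Q) + (2 * k) • (Q * D)) : D = 0 := by
  have hQQ : ∀ Z, Q * (Q * Z) = Q * Z := fun Z => by rw [← mul_assoc, hQ.eq]
  have hQDQ : Q * D * Q = 0 := by
    have h' := congrArg (fun Z => Q * Z * Q) h
    simp only [mul_add, add_mul, mul_smul_comm, smul_mul_assoc, mul_assoc, hQ.eq, hQQ] at h'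
    refine eq_zero_of_nsmul_eq_nsmul (a := m + k) (b := 2 * (m + k)) (by omega) ?_
    rw [mul_assoc]
    linear_combination (norm := module) h'
  have hQD : Q * D = 0 := by
    have h' := congrArg (Q * ·) h
    simp only [mul_add, mul_smul_comm, ← mul_assoc, hQ.eq, hQDQ, smul_zero, zero_add] at h'
    exact eq_zero_of_nsmul_eq_nsmul (a := m + k) (b := 2 * k) (by omega) h'
  have hDQ : D * Q = 0 := by
    have h' := congrArg (· * Q) h
    simp only [add_mul, smul_mul_assoc, mul_assoc, hQ.eq, hQDQ, smul_zero, add_zero] at h'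
    exact eq_zero_of_nsmul_eq_nsmul (a := m + k) (b := 2 * m) (by omega) h'
  rw [hDQ, hQD, smul_zero, smul_zero, add_zero] at h
  exact eq_zero_of_nsmul_eq_nsmul (a := m + k) (b := 0) (by omega) (by rw [h, zero_smul])

namespace IsJordanDerivableAtZero

variable {A : Type*} [Ring A] [IsAddTorsionFree A] {m k : ℕ} {δ : A →+ A}

theorem nsmul_add_eq_zero (h : IsJordanDerivableAtZero m k δ) {X Y : A} (hXY : X * Y = 0)
    (hYX : Y * X = 0) : m • (δ X * Y) + m • (δ Y * X) + k • (X * δ Y) + k • (Y * δ X) = 0 := by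
  have h' := h X Y hXY hYX
  rw [hXY, hYX, add_zero, map_zero, smul_zero] at h'
  refine nsmul_right_injective two_ne_zero ?_
  simp only [smul_add, smul_zero, ← mul_smul]
  exact h'.symm

theorem map_eq_zero_of_isIdempotentElem (h : IsJordanDerivableAtZero m k δ) (hmk : m ≠ k)
    (h1 : δ 1 = 0) {Q : A} (hQ : IsIdempotentElem Q) : δ Q = 0 := by
  refine hQ.eq_zero_of_add_nsmul_eq hmk ?_
  have h' := h.nsmul_add_eq_zero (X := Q) (Y := 1 - Q) (by simp [mul_sub, hQ.eq])
    (by simp [sub_mul, hQ.eq])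
  simp only [map_sub, h1, zero_sub, mul_sub, sub_mul, mul_one, one_mul, neg_mul, mul_neg] at h'
  linear_combination (norm := module) h'

theorem add_nsmul_map_eq (h : IsJordanDerivableAtZero m k δ) (hmk : m ≠ k) (h1 : δ 1 = 0)
    {Q X : A} (hQ : IsIdempotentElem Q) (hXQ : X * Q = X) (hQX : Q * X = X) :
    (m + k) • δ X = m • (δ X * Q) + k • (Q * δ X) := by
  have h' := h.nsmul_add_eq_zero (X := X) (Y := 1 - Q) (by simp [mul_sub, hXQ])
    (by simp [sub_mul, hQX])
  rw [h.map_eq_zero_of_isIdempotentElem hmk h1 hQ.one_sub] at h'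
  simp only [mul_sub, sub_mul, mul_one, one_mul, zero_mul, mul_zero, smul_zero, add_zero] at h'
  linear_combination (norm := module) h'

end IsJordanDerivableAtZero

instance Matrix.instIsAddTorsionFree {m n R : Type*} [AddMonoid R] [IsAddTorsionFree R] :
    IsAddTorsionFree (Matrix m n R) :=
  inferInstanceAs (IsAddTorsionFree (m → n → R))

namespace Matrix

variable {n R : Type*} [Fintype n] [DecidableEq n] [Semiring R]

theorem isIdempotentElem_single_one (i : n) : IsIdempotentElem (single i i (1 : R)) := by
  simp [IsIdempotentElem]

theorem isIdempotentElem_single_one_add_single {i j : n} (hij : i ≠ j) (c : R) :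
    IsIdempotentElem (single i i 1 + single i j c) := by
  simp [IsIdempotentElem, add_mul, mul_add, single_mul_single_of_ne, hij.symm]

theorem isIdempotentElem_single_one_add_single' {i j : n} (hij : i ≠ j) (c : R) :
    IsIdempotentElem (single i i 1 + single j i c) := by
  simp [IsIdempotentElem, add_mul, mul_add, single_mul_single_of_ne, hij]

end Matrix

namespace IsJordanDerivableAtZero

open Matrix

variable {n R : Type*} [Fintype n] [DecidableEq n] [Ring R] [IsAddTorsionFree R] {m k : ℕ}
  {δ : Matrix n n R →+ Matrix n n R}

theorem map_single_eq_zero_of_ne (h : IsJordanDerivableAtZero m k δ) (hmk : m ≠ k)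
    (h1 : δ 1 = 0) {i j : n} (hij : i ≠ j) (c : R) : δ (single i j c) = 0 := by
  have hsum :=
    h.map_eq_zero_of_isIdempotentElem hmk h1 (isIdempotentElem_single_one_add_single hij c)
  rwa [map_add, h.map_eq_zero_of_isIdempotentElem hmk h1 (isIdempotentElem_single_one i),
    zero_add] at hsum

theorem nsmul_map_single_mul_add_eq_zero (h : IsJordanDerivableAtZero m k δ) (hmk : m ≠ k)
    (h1 : δ 1 = 0) {i j : n} (hij : i ≠ j) (c : R) :
    m • (δ (single i i c) * single i j 1) + k • (single i j 1 * δ (single i i c)) = 0 := by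
  have hE := h.add_nsmul_map_eq hmk h1 (isIdempotentElem_single_one i) (X := single i i c)
    (by simp) (by simp)
  have hEP := h.add_nsmul_map_eq hmk h1 (isIdempotentElem_single_one_add_single hij 1)
    (X := single i i c + single i j c)
    (by simp [add_mul, mul_add, single_mul_single_of_ne, hij.symm])
    (by simp [add_mul, mul_add, single_mul_single_of_ne, hij.symm])
  rw [map_add, h.map_single_eq_zero_of_ne hmk h1 hij, add_zero, mul_add, add_mul] at hEP
  linear_combination (norm := module) hE - hEP

theorem nsmul_map_single_mul_add_eq_zero' (h : IsJordanDerivableAtZero m k δ) (hmk : m ≠ k)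
    (h1 : δ 1 = 0) {i j : n} (hij : i ≠ j) (c : R) :
    m • (δ (single i i c) * single j i 1) + k • (single j i 1 * δ (single i i c)) = 0 := by
  have hE := h.add_nsmul_map_eq hmk h1 (isIdempotentElem_single_one i) (X := single i i c)
    (by simp) (by simp)
  have hEP := h.add_nsmul_map_eq hmk h1 (isIdempotentElem_single_one_add_single' hij 1)
    (X := single i i c + single j i c)
    (by simp [add_mul, mul_add, single_mul_single_of_ne, hij])
    (by simp [add_mul, mul_add, single_mul_single_of_ne, hij])
  rw [map_add, h.map_single_eq_zero_of_ne hmk h1 hij.symm, add_zero, mul_add, add_mul] at hEP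
  linear_combination (norm := module) hE - hEP

theorem map_single_same_eq_zero [Nontrivial n] (h : IsJordanDerivableAtZero m k δ)
    (hmk : m ≠ k) (hm : m ≠ 0) (h1 : δ 1 = 0) (i : n) (c : R) : δ (single i i c) = 0 := by
  have hA {j} (hij : i ≠ j) := congr_fun₂ (h.nsmul_map_single_mul_add_eq_zero hmk h1 hij c)
  have hB {j} (hij : i ≠ j) := congr_fun₂ (h.nsmul_map_single_mul_add_eq_zero' hmk h1 hij c)
  simp only [Matrix.add_apply, Matrix.smul_apply, Matrix.zero_apply] at hA hB
  set T := δ (single i i c)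
  have cancel_m {r : R} (hr : m • r = 0) : r = 0 := (smul_eq_zero.mp hr).resolve_left hm
  obtain ⟨j, hji⟩ := exists_ne i
  have hTii : T i i = 0 := by
    have hAij := hA hji.symm i j
    have hBji := hB hji.symm j i
    simp only [mul_single_apply_same, single_mul_apply_same, mul_one, one_mul] at hAij hBji
    refine eq_zero_of_nsmul_eq_nsmul (a := m * m) (b := k * k) ?_ ?_
    · exact fun hmm => hmk (Nat.mul_self_inj.mp hmm)
    · linear_combination (norm := module) m • hAij - k • hBji
  ext x y
  rw [Matrix.zero_apply]
  obtain rfl | hy := eq_or_ne y i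
  · obtain rfl | hx := eq_or_ne x y
    · exact hTii
    · have hAxj := hA hji.symm x j
      simp only [mul_single_apply_same, single_mul_apply_of_ne _ _ _ _ _ hx, mul_one, smul_zero,
        add_zero] at hAxj
      exact cancel_m hAxj
  · have hBxi := hB hy.symm x i
    obtain rfl | hx := eq_or_ne x y
    · simp only [mul_single_apply_same, single_mul_apply_same, mul_one, one_mul, hTii, smul_zero,
        add_zero] at hBxi
      exact cancel_m hBxi
    · simp only [mul_single_apply_same, single_mul_apply_of_ne _ _ _ _ _ hx, mul_one, smul_zero,
        add_zero] at hBxi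
      exact cancel_m hBxi

theorem eq_zero_of_nontrivial [Nontrivial n] (h : IsJordanDerivableAtZero m k δ)
    (hmk : m ≠ k) (hm : m ≠ 0) (h1 : δ 1 = 0) : δ = 0 :=
  ext_addMonoidHom fun i j => AddMonoidHom.ext fun c => by
    obtain rfl | hij := eq_or_ne i j
    · exact h.map_single_same_eq_zero hmk hm h1 i c
    · exact h.map_single_eq_zero_of_ne hmk h1 hij c

end IsJordanDerivableAtZero

theorem mn_jordan_derivable_at_zero_matrix_general
    (N : ℕ) (hN : 2 ≤ N)
    (m k : ℕ) (hm : 0 < m) (hmk : m ≠ k)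
    (δ : Matrix (Fin N) (Fin N) ℂ → Matrix (Fin N) (Fin N) ℂ)
    (hadd : ∀ a b, δ (a + b) = δ a + δ b)
    (hδ1 : δ 1 = 0)
    (hzero : ∀ X Y : Matrix (Fin N) (Fin N) ℂ, X * Y = 0 → Y * X = 0 →
      (m + k) • δ (X * Y + Y * X) =
        (2 * m) • (δ X * Y) + (2 * m) • (δ Y * X)
          + (2 * k) • (X * δ Y) + (2 * k) • (Y * δ X)) :
    ∀ a, δ a = 0 := by
  have : Nontrivial (Fin N) := Fin.nontrivial_iff_two_le.mpr hN
  have hδ : IsJordanDerivableAtZero m k (AddMonoidHom.mk' δ hadd) := hzero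
  exact DFunLike.congr_fun (hδ.eq_zero_of_nontrivial hmk hm.ne' hδ1)

/-- Every `(m,k)`-Jordan derivable mapping at zero (with
`δ 1 = 0`, `m ≠ k` positive) on the matrix algebra `Mₙ(ℂ)`, `n ≥ 2`, is zero. -/
theorem mn_jordan_derivable_at_zero_matrix
    (N : ℕ) (hN : 2 ≤ N)
    (m k : ℕ) (hm : 0 < m) (hk : 0 < k) (hmk : m ≠ k)
    (δ : Matrix (Fin N) (Fin N) ℂ → Matrix (Fin N) (Fin N) ℂ)
    (hadd : ∀ a b, δ (a + b) = δ a + δ b)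
    (hδ1 : δ 1 = 0)
    (hzero : ∀ X Y : Matrix (Fin N) (Fin N) ℂ, X * Y = 0 → Y * X = 0 →
      (m + k) • δ (X * Y + Y * X) =
        (2 * m) • (δ X * Y) + (2 * m) • (δ Y * X)
          + (2 * k) • (X * δ Y) + (2 * k) • (Y * δ X)) :
    ∀ a, δ a = 0 :=
  mn_jordan_derivable_at_zero_matrix_general N hN m k hm hmk δ hadd hδ1 hzero
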